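/- arXiv:1003.1490 — 2 statements merged into one kernel-verified Lean document; each statement's English description precedes it below -/
import Mathlib

section
/- For a nearest-neighbour random walk on ℤ with right-step probability p ∈ (1/2, 1), the expected number of steps in an excursion from the origin that returns to the origin, summed appropriately, satisfies Σ_{k=1}^∞ (k-1) P{L = k} ≤ 1/(2p-1), where L is the length of an excursion (L = ∞ if the walk never returns). -/
open MeasureTheory ProbabilityTheory Finset DyckStep

/-! An excursion of length `2m + 2` is, up to a global sign, the step sequence `U w D` of a Dyck
word `w` of semilength `m`, so it has probability at most `2 C_m (pq)^(m+1)`, with `C_m` the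
Catalan numbers and `q = 1 - p`; excursions of odd length do not exist. Since
`(2m + 1) · 2 C_m ≤ 4 binom(2m, m)` and `4pq ≤ 1`, the series is dominated by
`Σ binom(2m, m) (pq)^m`. No generating function is needed to bound its partial sums: by the
Catalan recursion those of `Σ C_m (pq)^m` stay below `1/p`, the fixed point of `t ↦ 1 + pq t²`,
and by `binom(2n + 2, n + 1) = 2 Σ_{i+j=n} C_i binom(2j, j)` those of `Σ binom(2m, m) (pq)^m`
then stay below `1/(2p - 1)`, the fixed point of `t ↦ 1 + 2pq t / p`. -/

lemma sum_range_sum_antidiagonal_le_mul {f g : ℕ → ℝ} (hf : ∀ i, 0 ≤ f i) (hg : ∀ j, 0 ≤ g j)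
    (N : ℕ) :
    ∑ n ∈ range N, ∑ ij ∈ antidiagonal n, f ij.1 * g ij.2 ≤
      (∑ i ∈ range N, f i) * ∑ j ∈ range N, g j := by
  simp only [Nat.sum_antidiagonal_eq_sum_range_succ fun i j => f i * g j, Nat.succ_eq_add_one]
  rw [sum_range_diag_flip N fun i j => f i * g j, sum_mul]
  gcongr with i
  rw [mul_sum]
  gcongr
  · exact fun j _ _ => mul_nonneg (hf i) (hg j)
  · exact Nat.sub_le N i

lemma sum_range_succ_mul_pow_le_of_convolution {a b c : ℕ → ℝ} {k x : ℝ}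
    (hb : ∀ i, 0 ≤ b i) (hc : ∀ i, 0 ≤ c i) (hk : 0 ≤ k) (hx : 0 ≤ x) (ha₀ : a 0 = 1)
    (ha : ∀ n, a (n + 1) = k * ∑ ij ∈ antidiagonal n, b ij.1 * c ij.2) (N : ℕ) :
    ∑ m ∈ range (N + 1), a m * x ^ m ≤
      1 + k * x * ((∑ i ∈ range N, b i * x ^ i) * ∑ j ∈ range N, c j * x ^ j) := by
  have hterm : ∀ n, a (n + 1) * x ^ (n + 1) =
      k * x * ∑ ij ∈ antidiagonal n, (b ij.1 * x ^ ij.1) * (c ij.2 * x ^ ij.2) := by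
    intro n
    rw [ha, mul_sum, mul_sum, sum_mul]
    refine sum_congr rfl fun ij hij => ?_
    rw [← mem_antidiagonal.1 hij, pow_succ, pow_add]
    ring
  rw [sum_range_succ', ha₀, pow_zero, mul_one, add_comm]
  simp only [hterm, ← mul_sum]
  gcongr
  exact sum_range_sum_antidiagonal_le_mul (fun i => mul_nonneg (hb i) (pow_nonneg hx i))
    (fun j => mul_nonneg (hc j) (pow_nonneg hx j)) N

lemma sum_range_catalan_mul_pow_le {p : ℝ} (hp : 0 < p) (hp1 : p ≤ 1) (N : ℕ) :
    ∑ m ∈ range N, (catalan m : ℝ) * (p * (1 - p)) ^ m ≤ 1 / p := by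
  have hx : 0 ≤ p * (1 - p) := mul_nonneg hp.le (by linarith)
  induction N with
  | zero => simp [hp.le]
  | succ N ih =>
    have hsum : 0 ≤ ∑ m ∈ range N, (catalan m : ℝ) * (p * (1 - p)) ^ m :=
      sum_nonneg fun m _ => by positivity
    calc _ ≤ 1 + 1 * (p * (1 - p)) * ((∑ i ∈ range N, (catalan i : ℝ) * (p * (1 - p)) ^ i) *
            ∑ j ∈ range N, (catalan j : ℝ) * (p * (1 - p)) ^ j) :=
          sum_range_succ_mul_pow_le_of_convolution (fun i => by positivity)
            (fun i => by positivity) zero_le_one hx (by simp) (fun n => by simp [catalan_succ']) N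
      _ ≤ 1 + 1 * (p * (1 - p)) * (1 / p * (1 / p)) := by gcongr
      _ = 1 / p := by field_simp; ring

lemma centralBinom_succ_eq_two_mul_sum_antidiagonal (n : ℕ) :
    (n + 1).centralBinom = 2 * ∑ ij ∈ antidiagonal n, catalan ij.1 * ij.2.centralBinom := by
  have hswap : ∑ ij ∈ antidiagonal n, (ij.1 + 1) * (catalan ij.1 * catalan ij.2) =
      ∑ ij ∈ antidiagonal n, catalan ij.1 * ij.2.centralBinom := by
    rw [← Nat.sum_antidiagonal_swap]
    refine sum_congr rfl fun ij _ => ?_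
    rw [Prod.fst_swap, Prod.snd_swap, ← succ_mul_catalan_eq_centralBinom]
    ring
  -- split the weight `n + 2 = (i + 1) + (j + 1)` and swap `i, j` in the first half
  calc (n + 1).centralBinom = (n + 2) * catalan (n + 1) :=
        (succ_mul_catalan_eq_centralBinom _).symm
    _ = ∑ ij ∈ antidiagonal n, ((ij.1 + 1) + (ij.2 + 1)) * (catalan ij.1 * catalan ij.2) := by
        rw [catalan_succ', mul_sum]
        refine sum_congr rfl fun ij hij => ?_
        rw [← mem_antidiagonal.1 hij]
        ring
    _ = 2 * ∑ ij ∈ antidiagonal n, catalan ij.1 * ij.2.centralBinom := by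
        rw [two_mul]
        nth_rw 1 [← hswap]
        rw [← sum_add_distrib]
        refine sum_congr rfl fun ij _ => ?_
        rw [← succ_mul_catalan_eq_centralBinom]
        ring

lemma sum_range_centralBinom_mul_pow_le {p : ℝ} (hp : 1 / 2 < p) (hp1 : p ≤ 1) (N : ℕ) :
    ∑ m ∈ range N, (m.centralBinom : ℝ) * (p * (1 - p)) ^ m ≤ 1 / (2 * p - 1) := by
  have hp0 : 0 < p := by linarith
  have hs : 0 < 2 * p - 1 := by linarith
  have hx : 0 ≤ p * (1 - p) := mul_nonneg hp0.le (by linarith)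
  induction N with
  | zero => simp [hs.le]
  | succ N ih =>
    calc _ ≤ 1 + 2 * (p * (1 - p)) * ((∑ i ∈ range N, (catalan i : ℝ) * (p * (1 - p)) ^ i) *
            ∑ j ∈ range N, (j.centralBinom : ℝ) * (p * (1 - p)) ^ j) :=
          sum_range_succ_mul_pow_le_of_convolution (fun i => by positivity)
            (fun i => by positivity) zero_le_two hx (by simp)
            (fun n => by simp [centralBinom_succ_eq_two_mul_sum_antidiagonal]) N
      _ ≤ 1 + 2 * (p * (1 - p)) * (1 / p * (1 / (2 * p - 1))) := by
          gcongr
          exact sum_range_catalan_mul_pow_le hp0 hp1 N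
      _ = 1 / (2 * p - 1) := by field_simp; ring

def IsFirstReturn (x : ℕ → ℤ) (n : ℕ) : Prop :=
  ∑ i ∈ range n, x i = 0 ∧ ∀ t, 1 ≤ t → t < n → ∑ i ∈ range t, x i ≠ 0

def stepValue (σ : ℤ) : DyckStep → ℤ
  | U => σ
  | D => -σ

def dyckSteps (σ : ℤ) (x : ℕ → ℤ) (n : ℕ) : List DyckStep :=
  (List.range n).map fun i => if x i = σ then U else D

section Excursions

variable {σ : ℤ} {x : ℕ → ℤ} {n : ℕ}

lemma take_dyckSteps (t : ℕ) : (dyckSteps σ x n).take t = dyckSteps σ x (min t n) := by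
  simp [dyckSteps, ← List.map_take, List.take_range]

lemma count_U_sub_count_D_dyckSteps (hσ : σ = 1 ∨ σ = -1) (hx : ∀ i < n, x i = 1 ∨ x i = -1) :
    ((dyckSteps σ x n).count U : ℤ) - (dyckSteps σ x n).count D = σ * ∑ i ∈ range n, x i := by
  induction n with
  | zero => simp [dyckSteps]
  | succ n ih =>
    have h := ih fun i hi => hx i (by omega)
    simp only [dyckSteps, List.range_succ, List.map_append, List.count_append] at h ⊢
    rw [sum_range_succ, mul_add, ← h]
    rcases hσ with rfl | rfl <;> rcases hx n (by omega) with hn | hn <;> simp [hn] <;> ring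

lemma getD_dyckSteps {i : ℕ} (hi : i < n) :
    (dyckSteps σ x n).getD i D = if x i = σ then U else D := by
  simp [dyckSteps, hi]

lemma IsFirstReturn.zero_lt_mul_sum (hx : ∀ i < n, x i = 1 ∨ x i = -1) (hr : IsFirstReturn x n)
    {t : ℕ} (ht : 1 ≤ t) (htn : t < n) : 0 < x 0 * ∑ i ∈ range t, x i := by
  induction t, ht using Nat.le_induction with
  | base => rcases hx 0 (by omega) with h | h <;> simp [h]
  | succ t ht ih =>
    have hpos := ih (by omega)
    have hne := hr.2 (t + 1) (by omega) htn
    rw [sum_range_succ] at hne ⊢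
    rcases hx 0 (by omega) with h0 | h0 <;> rcases hx t (by omega) with h | h <;>
      simp only [h0, h] at hpos hne ⊢ <;> omega

lemma IsFirstReturn.exists_isNested (hn : 0 < n) (hx : ∀ i < n, x i = 1 ∨ x i = -1)
    (hr : IsFirstReturn x n) :
    ∃ v : DyckWord, v.IsNested ∧ v.toList.length = n ∧
      ∀ i < n, x i = stepValue (x 0) (v.toList.getD i D) := by
  have hσ := hx 0 hn
  have hheight (t : ℕ) : (((dyckSteps (x 0) x n).take t).count U : ℤ) -
      ((dyckSteps (x 0) x n).take t).count D = x 0 * ∑ i ∈ range (min t n), x i := by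
    rw [take_dyckSteps]
    exact count_U_sub_count_D_dyckSteps hσ fun i hi => hx i (by omega)
  have hlen : (dyckSteps (x 0) x n).length = n := by simp [dyckSteps]
  have hbal := hheight n
  rw [min_self, hr.1, mul_zero, List.take_of_length_le hlen.le] at hbal
  have hlt {t : ℕ} (ht : 0 < t) (htn : t < n) :
      ((dyckSteps (x 0) x n).take t).count D < ((dyckSteps (x 0) x n).take t).count U := by
    have := hheight t
    rw [min_eq_left htn.le] at this
    have := hr.zero_lt_mul_sum hx ht htn
    omega
  refine ⟨⟨dyckSteps (x 0) x n, by omega, fun t => ?_⟩,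
    ⟨?_, fun t ht htn => hlt ht (htn.trans_eq hlen)⟩, hlen, fun i hi => ?_⟩
  · rcases Nat.eq_zero_or_pos t with rfl | ht
    · simp
    rcases lt_or_ge t n with htn | htn
    · exact (hlt ht htn).le
    · rw [List.take_of_length_le (hlen.le.trans htn)]
      omega
  · rw [ne_eq, ← DyckWord.toList_eq_nil, ← List.length_eq_zero_iff]
    change (dyckSteps (x 0) x n).length ≠ 0
    omega
  · rw [getD_dyckSteps hi]
    split_ifs with h
    · exact h
    · rcases hσ with h0 | h0 <;> rcases hx i hi with h' | h' <;> simp_all [stepValue]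

lemma DyckWord.length_nest (w : DyckWord) : w.nest.toList.length = 2 * w.semilength + 2 := by
  rw [← DyckWord.two_mul_semilength_eq_length, DyckWord.semilength_nest, mul_add_one]

lemma IsFirstReturn.exists_dyckWord {m : ℕ} (hx : ∀ i < 2 * m + 2, x i = 1 ∨ x i = -1)
    (hr : IsFirstReturn x (2 * m + 2)) :
    ∃ w : DyckWord, w.semilength = m ∧
      ∀ i < 2 * m + 2, x i = stepValue (x 0) (w.nest.toList.getD i D) := by
  obtain ⟨v, hv, hlen, hxv⟩ := hr.exists_isNested (by omega) hx
  refine ⟨v.denest hv, ?_, by rwa [DyckWord.nest_denest]⟩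
  have := (v.denest hv).length_nest
  rw [DyckWord.nest_denest, hlen] at this
  omega

lemma not_isFirstReturn_odd {m : ℕ} (hx : ∀ i < 2 * m + 1, x i = 1 ∨ x i = -1) :
    ¬ IsFirstReturn x (2 * m + 1) := fun hr => by
  obtain ⟨v, -, hlen, -⟩ := hr.exists_isNested (by omega) hx
  have := v.two_mul_semilength_eq_length
  omega

end Excursions

lemma prod_range_getD_eq_pow_count {M : Type*} [CommMonoid M] (f : DyckStep → M)
    (l : List DyckStep) :
    ∏ i ∈ range l.length, f (l.getD i D) = f U ^ l.count U * f D ^ l.count D := by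
  induction l with
  | nil => simp
  | cons s l ih =>
    rw [List.length_cons, prod_range_succ']
    simp only [List.getD_cons_succ, List.getD_cons_zero, ih]
    cases s <;> simp only [List.count_cons_self, pow_succ] <;> ac_rfl

noncomputable def stepLaw (p : ℝ) : Measure ℤ :=
  ENNReal.ofReal p • Measure.dirac 1 + ENNReal.ofReal (1 - p) • Measure.dirac (-1)

lemma stepLaw_one (p : ℝ) : stepLaw p {1} = ENNReal.ofReal p := by
  simp [stepLaw]

lemma stepLaw_neg_one (p : ℝ) : stepLaw p {-1} = ENNReal.ofReal (1 - p) := by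
  simp [stepLaw]

lemma stepLaw_compl_pair (p : ℝ) : stepLaw p {1, -1}ᶜ = 0 := by
  simp [stepLaw]

lemma stepLaw_stepValue_U_mul_stepValue_D {σ : ℤ} (hσ : σ = 1 ∨ σ = -1) (p : ℝ) :
    stepLaw p {stepValue σ U} * stepLaw p {stepValue σ D} =
      ENNReal.ofReal p * ENNReal.ofReal (1 - p) := by
  rcases hσ with rfl | rfl <;> simp [stepValue, stepLaw_one, stepLaw_neg_one, mul_comm]

section RandomWalk

variable {Ω : Type*} [MeasurableSpace Ω] {P : Measure Ω} {p : ℝ} {X : ℕ → Ω → ℤ}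

lemma ae_eq_one_or_eq_neg_one (hmeas : ∀ n, Measurable (X n))
    (hlaw : ∀ n, P.map (X n) = stepLaw p) : ∀ᵐ ω ∂P, ∀ n, X n ω = 1 ∨ X n ω = -1 := by
  refine ae_all_iff.2 fun n => ?_
  have hnull : P (X n ⁻¹' {1, -1}ᶜ) = 0 := by
    rw [← Measure.map_apply (hmeas n) (by measurability), hlaw, stepLaw_compl_pair]
  filter_upwards [measure_eq_zero_iff_ae_notMem.1 hnull] with ω hω
  simpa [or_iff_not_imp_left] using hω

lemma measure_cylinder_dyckWord (hmeas : ∀ n, Measurable (X n)) (hindep : iIndepFun X P)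
    (hlaw : ∀ n, P.map (X n) = stepLaw p) {σ : ℤ} (hσ : σ = 1 ∨ σ = -1) (v : DyckWord) :
    P (⋂ i ∈ range v.toList.length, X i ⁻¹' {stepValue σ (v.toList.getD i D)}) =
      (ENNReal.ofReal p * ENNReal.ofReal (1 - p)) ^ v.semilength := by
  rw [hindep.measure_inter_preimage_eq_mul _ fun _ _ => measurableSet_singleton _]
  simp_rw [← Measure.map_apply (hmeas _) (measurableSet_singleton _), hlaw]
  rw [prod_range_getD_eq_pow_count (fun s => stepLaw p {stepValue σ s}),
    ← DyckWord.semilength_eq_count_D]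
  exact (mul_pow _ _ _).symm.trans (congrArg (· ^ _) (stepLaw_stepValue_U_mul_stepValue_D hσ p))

lemma measure_isFirstReturn_le (hmeas : ∀ n, Measurable (X n)) (hindep : iIndepFun X P)
    (hlaw : ∀ n, P.map (X n) = stepLaw p) (m : ℕ) :
    P {ω | IsFirstReturn (X · ω) (2 * m + 2)} ≤
      2 * catalan m * (ENNReal.ofReal p * ENNReal.ofReal (1 - p)) ^ (m + 1) := by
  let cylinder (σ : ℤ) (w : DyckWord) : Set Ω :=
    ⋂ i ∈ range w.nest.toList.length, X i ⁻¹' {stepValue σ (w.nest.toList.getD i D)}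
  calc P {ω | IsFirstReturn (X · ω) (2 * m + 2)}
      ≤ P (⋃ σ ∈ ({1, -1} : Finset ℤ), ⋃ w : {w : DyckWord // w.semilength = m},
          cylinder σ w) := by
        refine measure_mono_ae ((ae_eq_one_or_eq_neg_one hmeas hlaw).mono fun ω hω hr => ?_)
        obtain ⟨w, hw, hx⟩ := IsFirstReturn.exists_dyckWord (fun i _ => hω i) hr
        refine Set.mem_iUnion₂.2 ⟨X 0 ω, by simpa using hω 0,
          Set.mem_iUnion.2 ⟨⟨w, hw⟩, Set.mem_iInter₂.2 fun i hi => hx i ?_⟩⟩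
        rwa [w.length_nest, hw, mem_range] at hi
    _ ≤ ∑ σ ∈ ({1, -1} : Finset ℤ), ∑ w : {w : DyckWord // w.semilength = m},
          P (cylinder σ w) :=
        (measure_biUnion_finset_le _ _).trans (sum_le_sum fun σ _ => measure_iUnion_fintype_le _ _)
    _ = ∑ σ ∈ ({1, -1} : Finset ℤ), ∑ w : {w : DyckWord // w.semilength = m},
          (ENNReal.ofReal p * ENNReal.ofReal (1 - p)) ^ (m + 1) := by
        refine sum_congr rfl fun σ hσ => sum_congr rfl fun w _ => ?_
        rw [measure_cylinder_dyckWord hmeas hindep hlaw (by simpa using hσ),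
          DyckWord.semilength_nest, w.2]
    _ = _ := by simp [DyckWord.card_dyckWord_semilength_eq_catalan, mul_assoc]

lemma measure_isFirstReturn_odd (hmeas : ∀ n, Measurable (X n))
    (hlaw : ∀ n, P.map (X n) = stepLaw p) (m : ℕ) :
    P {ω | IsFirstReturn (X · ω) (2 * m + 1)} = 0 :=
  measure_eq_zero_iff_ae_notMem.2 <| (ae_eq_one_or_eq_neg_one hmeas hlaw).mono
    fun _ hω => not_isFirstReturn_odd fun i _ => hω i

lemma mul_toReal_measure_isFirstReturn_le (hp0 : 0 ≤ p) (hp1 : p ≤ 1)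
    (hmeas : ∀ n, Measurable (X n))
    (hindep : iIndepFun X P) (hlaw : ∀ n, P.map (X n) = stepLaw p) (m : ℕ) :
    ((2 * m + 1 : ℕ) : ℝ) * (P {ω | IsFirstReturn (X · ω) (2 * m + 2)}).toReal ≤
      m.centralBinom * (p * (1 - p)) ^ m := by
  have hx : 0 ≤ p * (1 - p) := mul_nonneg hp0 (by linarith)
  have h4x : 4 * (p * (1 - p)) ≤ 1 := by nlinarith [sq_nonneg (2 * p - 1)]
  have hmeasure : (P {ω | IsFirstReturn (X · ω) (2 * m + 2)}).toReal ≤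
      2 * catalan m * (p * (1 - p)) ^ (m + 1) := by
    refine ENNReal.toReal_le_of_le_ofReal (by positivity) ((measure_isFirstReturn_le hmeas hindep
      hlaw m).trans_eq ?_)
    rw [← ENNReal.ofReal_mul hp0, ← ENNReal.ofReal_pow hx, ← ENNReal.ofReal_natCast,
      ← ENNReal.ofReal_ofNat 2, ← ENNReal.ofReal_mul zero_le_two,
      ← ENNReal.ofReal_mul (by positivity)]
  calc ((2 * m + 1 : ℕ) : ℝ) * (P {ω | IsFirstReturn (X · ω) (2 * m + 2)}).toReal
      ≤ (2 * m + 1) * (2 * catalan m * (p * (1 - p)) ^ (m + 1)) := by push_cast; gcongr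
    _ ≤ 4 * (p * (1 - p)) * (((m + 1) * catalan m : ℕ) * (p * (1 - p)) ^ m) := by
        have hterm : 0 ≤ (catalan m : ℝ) * (p * (1 - p)) ^ m * (p * (1 - p)) := by positivity
        push_cast
        rw [pow_succ]
        nlinarith
    _ ≤ m.centralBinom * (p * (1 - p)) ^ m := by
        rw [succ_mul_catalan_eq_centralBinom]
        exact mul_le_of_le_one_left (by positivity) h4x

end RandomWalk

lemma tsum_le_of_even_eq_zero_of_odd_le {F G : ℕ → ℝ} {c : ℝ} (hF : ∀ k, 0 ≤ F k)
    (heven : ∀ m, F (2 * m) = 0) (hodd : ∀ m, F (2 * m + 1) ≤ G m)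
    (hG : ∀ N, ∑ m ∈ range N, G m ≤ c) : ∑' k, F k ≤ c := by
  have hpairs (N : ℕ) : ∑ k ∈ range (2 * N), F k ≤ ∑ m ∈ range N, G m := by
    induction N with
    | zero => simp
    | succ N ih =>
      rw [mul_add_one, sum_range_succ, sum_range_succ, sum_range_succ, heven, add_zero]
      exact add_le_add ih (hodd N)
  refine Real.tsum_le_of_sum_range_le hF fun N => ?_
  calc ∑ k ∈ range N, F k ≤ ∑ k ∈ range (2 * N), F k :=
        sum_le_sum_of_subset_of_nonneg (range_subset_range.2 (by omega)) fun k _ _ => hF k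
    _ ≤ c := (hpairs N).trans (hG N)

theorem stmt5_general
    {Ω : Type*} [MeasurableSpace Ω] (P : Measure Ω)
    (p : ℝ) (hp : 1/2 < p) (hp1 : p < 1)
    (X : ℕ → Ω → ℤ) (hmeas : ∀ n, Measurable (X n))
    (hindep : iIndepFun X P)
    (hdist : ∀ n, Measure.map (X n) P =
      (ENNReal.ofReal p) • Measure.dirac (1 : ℤ) +
        (ENNReal.ofReal (1 - p)) • Measure.dirac (-1 : ℤ)) :
    ∑' k : ℕ, (k : ℝ) *
        (P {ω | (∑ i ∈ Finset.range (k + 1), X i ω) = 0 ∧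
            ∀ n, 1 ≤ n → n < k + 1 → (∑ i ∈ Finset.range n, X i ω) ≠ 0}).toReal
      ≤ 1 / (2 * p - 1) := by
  change ∑' k : ℕ, (k : ℝ) * (P {ω | IsFirstReturn (X · ω) (k + 1)}).toReal ≤ _
  refine tsum_le_of_even_eq_zero_of_odd_le (fun k => by positivity) (fun m => ?_)
    (mul_toReal_measure_isFirstReturn_le (by linarith) hp1.le hmeas hindep hdist)
    (sum_range_centralBinom_mul_pow_le hp hp1.le)
  rw [measure_isFirstReturn_odd hmeas hdist, ENNReal.toReal_zero, mul_zero]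

/-- For a nearest-neighbour random walk on ℤ with right-step probability `p ∈ (1/2,1)`,
and `L` the length of an excursion from the origin (`L = min{n ≥ 1 : S n = 0}`, `L = ∞`
if there is no return), one has `Σ_{k≥1} (k-1) P{L = k} ≤ 1/(2p-1)`. -/
theorem stmt5
    {Ω : Type*} [MeasurableSpace Ω] (P : Measure Ω) [IsProbabilityMeasure P]
    (p : ℝ) (hp : 1/2 < p) (hp1 : p < 1)
    (X : ℕ → Ω → ℤ) (hmeas : ∀ n, Measurable (X n))
    (hindep : iIndepFun X P)
    (hdist : ∀ n, Measure.map (X n) P =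
      (ENNReal.ofReal p) • Measure.dirac (1 : ℤ) +
        (ENNReal.ofReal (1 - p)) • Measure.dirac (-1 : ℤ)) :
    ∑' k : ℕ, (k : ℝ) *
        (P {ω | (∑ i ∈ Finset.range (k + 1), X i ω) = 0 ∧
            ∀ n, 1 ≤ n → n < k + 1 → (∑ i ∈ Finset.range n, X i ω) ≠ 0}).toReal
      ≤ 1 / (2 * p - 1) :=
  stmt5_general P p hp hp1 X hmeas hindep hdist
end

section
/- With V = X + Y as above (X exponential mean m, Y ≥ 0 independent), for the first passage time θ_x = min{n ≥ 1 : Σ_{i=1}^n V_i ≥ x}, the overshoot satisfies P{Σ_{i=1}^{θ_x} V_i ≤ x + y} ≤ min{1, y/m} for all x, y > 0. -/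
open MeasureTheory ProbabilityTheory Filter Finset

/-!
The exponential law has constant hazard rate `1/m`, so `P(a ≤ X ≤ a + y) ≤ (y/m) P(a ≤ X)` for
every real `a`, and conditioning on `Y` transfers this to `V = X + Y`. Conditionally on the first
`k` steps, on the event that the walk is still below `x`, the event `θ_x = k + 1` is
`{V_{k+1} ≥ x - S_k}` and the overshoot event is `{x - S_k ≤ V_{k+1} ≤ x - S_k + y}`. Hence
`P(θ_x = k + 1, S_{θ_x} ≤ x + y) ≤ (y/m) P(θ_x = k + 1)`, and the events `θ_x = k + 1` are
disjoint.
-/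

lemma cdf_expMeasure_add_sub_le {r y : ℝ} (hr : 0 < r) (hy : 0 ≤ y) (a : ℝ) :
    cdf (expMeasure r) (a + y) - cdf (expMeasure r) a ≤ r * y * (1 - cdf (expMeasure r) a) := by
  simp only [cdf_expMeasure_eq hr]
  have hry : 0 ≤ r * y := by positivity
  rcases le_or_gt 0 a with ha | ha
  · have hdecay : Real.exp (-(r * (a + y))) = Real.exp (-(r * a)) * Real.exp (-(r * y)) := by
      rw [← Real.exp_add]; ring_nf
    have := Real.add_one_le_exp (-(r * y))
    rw [if_pos ha, if_pos (by linarith), hdecay]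
    nlinarith [Real.exp_pos (-(r * a))]
  · rw [if_neg (not_le.mpr ha), sub_zero, sub_zero, mul_one]
    split_ifs with hay
    · nlinarith [Real.add_one_le_exp (-(r * (a + y)))]
    · exact hry

lemma expMeasure_Icc_le_mul_Ici {r y : ℝ} (hr : 0 < r) (hy : 0 ≤ y) (a : ℝ) :
    expMeasure r (Set.Icc a (a + y)) ≤ ENNReal.ofReal (r * y) * expMeasure r (Set.Ici a) := by
  have : IsProbabilityMeasure (expMeasure r) := isProbabilityMeasure_expMeasure hr
  have : NullSingletonClass (expMeasure r) := by
    unfold expMeasure gammaMeasure; infer_instance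
  rw [← measure_congr Ioc_ae_eq_Icc, ← measure_congr Ioi_ae_eq_Ici, ← measure_cdf (expMeasure r),
    StieltjesFunction.measure_Ioc, StieltjesFunction.measure_Ioi _ (tendsto_cdf_atTop _),
    ← ENNReal.ofReal_mul (by positivity)]
  exact ENNReal.ofReal_le_ofReal (cdf_expMeasure_add_sub_le hr hy a)

lemma map_eq_expMeasure {Ω : Type*} [MeasurableSpace Ω] {P : Measure Ω} [IsProbabilityMeasure P]
    {m : ℝ} (hm : 0 < m) {X : Ω → ℝ} (hX : Measurable X)
    (hXexp : ∀ t : ℝ, 0 ≤ t → P {ω | X ω ≤ t} = ENNReal.ofReal (1 - Real.exp (-t / m)))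
    (hXpos : P {ω | X ω < 0} = 0) :
    P.map X = expMeasure m⁻¹ := by
  have : IsProbabilityMeasure (P.map X) := Measure.isProbabilityMeasure_map hX.aemeasurable
  have : IsProbabilityMeasure (expMeasure m⁻¹) := isProbabilityMeasure_expMeasure (inv_pos.2 hm)
  refine Measure.eq_of_cdf _ _ (StieltjesFunction.ext fun t => ?_)
  rw [cdf_eq_real, map_measureReal_apply hX measurableSet_Iic, cdf_expMeasure_eq (inv_pos.2 hm),
    measureReal_def]
  change (P {ω | X ω ≤ t}).toReal = _
  split_ifs with ht
  · rw [hXexp t ht, ENNReal.toReal_ofReal, neg_div, div_eq_inv_mul]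
    · simp only [sub_nonneg, Real.exp_le_one_iff]
      exact div_nonpos_of_nonpos_of_nonneg (by linarith) hm.le
  · have hnull : P {ω | X ω ≤ t} = 0 :=
      measure_mono_null (fun ω (h : X ω ≤ t) => show X ω < 0 by linarith) hXpos
    rw [hnull, ENNReal.toReal_zero]

lemma prod_setOf_overshoot_le {β : Type*} [MeasurableSpace β] (ν : Measure β) [SFinite ν]
    {μ : Measure ℝ} [SFinite μ] {y : ℝ} {c : ENNReal}
    (hμ : ∀ a, μ (Set.Icc a (a + y)) ≤ c * μ (Set.Ici a))
    {s : Set β} (hs : MeasurableSet s) {f : β → ℝ} (hf : Measurable f) (x : ℝ) :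
    ν.prod μ {q | q.1 ∈ s ∧ f q.1 + q.2 ∈ Set.Icc x (x + y)} ≤
      c * ν.prod μ {q | q.1 ∈ s ∧ x ≤ f q.1 + q.2} := by
  have hsum : Measurable fun q : β × ℝ => f q.1 + q.2 := (hf.comp measurable_fst).add measurable_snd
  have hE : MeasurableSet {q : β × ℝ | q.1 ∈ s ∧ f q.1 + q.2 ∈ Set.Icc x (x + y)} :=
    (measurable_fst hs).inter (hsum measurableSet_Icc)
  have hD : MeasurableSet {q : β × ℝ | q.1 ∈ s ∧ x ≤ f q.1 + q.2} :=
    (measurable_fst hs).inter (measurableSet_le measurable_const hsum)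
  rw [Measure.prod_apply hE, Measure.prod_apply hD,
    ← lintegral_const_mul _ (measurable_measure_prodMk_left hD)]
  refine lintegral_mono fun z => ?_
  by_cases hz : z ∈ s
  · have hIcc : Prod.mk z ⁻¹' {q | q.1 ∈ s ∧ f q.1 + q.2 ∈ Set.Icc x (x + y)} =
        Set.Icc (x - f z) (x - f z + y) := by
      ext w; simp only [Set.mem_preimage, Set.mem_ofPred_eq, Set.mem_Icc, hz, true_and]
      constructor <;> rintro ⟨h₁, h₂⟩ <;> constructor <;> linarith
    have hIci : Prod.mk z ⁻¹' {q | q.1 ∈ s ∧ x ≤ f q.1 + q.2} = Set.Ici (x - f z) := by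
      ext w; simp only [Set.mem_preimage, Set.mem_ofPred_eq, Set.mem_Ici, hz, true_and]
      constructor <;> intro h <;> linarith
    rw [hIcc, hIci]
    exact hμ _
  · simp [hz]

lemma ProbabilityTheory.IndepFun.measure_overshoot_le {Ω β : Type*} [MeasurableSpace Ω]
    [MeasurableSpace β] {P : Measure Ω} [IsFiniteMeasure P] {Z : Ω → β} {W : Ω → ℝ}
    (hZW : IndepFun Z W P)
    (hZ : Measurable Z) (hW : Measurable W) {y : ℝ} {c : ENNReal}
    (hW_law : ∀ a, P.map W (Set.Icc a (a + y)) ≤ c * P.map W (Set.Ici a))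
    {s : Set β} (hs : MeasurableSet s) {f : β → ℝ} (hf : Measurable f) (x : ℝ) :
    P {ω | Z ω ∈ s ∧ f (Z ω) + W ω ∈ Set.Icc x (x + y)} ≤
      c * P {ω | Z ω ∈ s ∧ x ≤ f (Z ω) + W ω} := by
  have hsum : Measurable fun q : β × ℝ => f q.1 + q.2 := (hf.comp measurable_fst).add measurable_snd
  have hpair : Measurable fun ω => (Z ω, W ω) := hZ.prodMk hW
  have hlaw := (indepFun_iff_map_prod_eq_prod_map_map hZ.aemeasurable hW.aemeasurable).mp hZW
  have hE : MeasurableSet {q : β × ℝ | q.1 ∈ s ∧ f q.1 + q.2 ∈ Set.Icc x (x + y)} :=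
    (measurable_fst hs).inter (hsum measurableSet_Icc)
  have hD : MeasurableSet {q : β × ℝ | q.1 ∈ s ∧ x ≤ f q.1 + q.2} :=
    (measurable_fst hs).inter (measurableSet_le measurable_const hsum)
  have h := prod_setOf_overshoot_le (P.map Z) hW_law hs hf x
  rwa [← hlaw, Measure.map_apply hpair hE, Measure.map_apply hpair hD] at h

lemma ProbabilityTheory.IndepFun.map_add_Icc_le_mul_Ici {Ω : Type*} [MeasurableSpace Ω]
    {P : Measure Ω} [IsFiniteMeasure P] {X Y : Ω → ℝ} (hXY : IndepFun X Y P)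
    (hX : Measurable X) (hY : Measurable Y) {y : ℝ} {c : ENNReal}
    (hX_law : ∀ a, P.map X (Set.Icc a (a + y)) ≤ c * P.map X (Set.Ici a)) (a : ℝ) :
    P.map (fun ω => X ω + Y ω) (Set.Icc a (a + y)) ≤
      c * P.map (fun ω => X ω + Y ω) (Set.Ici a) := by
  have h := hXY.symm.measure_overshoot_le hY hX hX_law MeasurableSet.univ measurable_id a
  simp only [Set.mem_univ, true_and, id, add_comm (Y _)] at h
  have hsum : Measurable fun ω => X ω + Y ω := hX.add hY
  rw [Measure.map_apply hsum measurableSet_Icc, Measure.map_apply hsum measurableSet_Ici]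
  exact h

def IsFirstPassage (S : ℕ → ℝ) (x : ℝ) (n : ℕ) : Prop :=
  (∀ k, 1 ≤ k → k < n → S k < x) ∧ x ≤ S n

lemma IsFirstPassage.eq {S : ℕ → ℝ} {x : ℝ} {n n' : ℕ} (h : IsFirstPassage S x n)
    (h' : IsFirstPassage S x n') (hn : 1 ≤ n) (hn' : 1 ≤ n') : n = n' := by
  by_contra hne
  rcases Nat.lt_or_gt_of_ne hne with hlt | hlt
  · exact (h'.1 n hn hlt).not_ge h.2
  · exact (h.1 n' hn' hlt).not_ge h'.2

open Function in
lemma pairwise_disjoint_setOf_isFirstPassage_succ {Ω : Type*} (S : Ω → ℕ → ℝ) (x : ℝ) :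
    Pairwise (Disjoint on fun k => {ω | IsFirstPassage (S ω) x (k + 1)}) := fun i j hij =>
  Set.disjoint_left.2 fun _ hi hj => hij (Nat.succ_injective (hi.eq hj i.succ_pos j.succ_pos))

lemma measurableSet_setOf_forall_lt {Ω : Type*} [MeasurableSpace Ω] {S : Ω → ℕ → ℝ}
    (hS : ∀ n, Measurable fun ω => S ω n) (x : ℝ) (n : ℕ) :
    MeasurableSet {ω | ∀ k, 1 ≤ k → k < n → S ω k < x} :=
  measurableSet_setOfPred.2 <| Measurable.forall fun k => Measurable.imp measurable_const <|
    Measurable.imp measurable_const <|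
      measurableSet_setOfPred.1 (measurableSet_lt (hS k) measurable_const)

lemma measurableSet_isFirstPassage {Ω : Type*} [MeasurableSpace Ω] {S : Ω → ℕ → ℝ}
    (hS : ∀ n, Measurable fun ω => S ω n) (x : ℝ) (n : ℕ) :
    MeasurableSet {ω | IsFirstPassage (S ω) x n} :=
  (measurableSet_setOf_forall_lt hS x n).inter (measurableSet_le measurable_const (hS n))

open Function in
lemma measure_iUnion_le_mul_of_pairwise_disjoint {Ω ι : Type*} [MeasurableSpace Ω] [Countable ι]
    (P : Measure Ω) {E B : ι → Set Ω} (hB : Pairwise (Disjoint on B))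
    (hBm : ∀ i, MeasurableSet (B i)) {c : ENNReal} (h : ∀ i, P (E i) ≤ c * P (B i)) :
    P (⋃ i, E i) ≤ c * P (⋃ i, B i) :=
  calc P (⋃ i, E i) ≤ ∑' i, P (E i) := measure_iUnion_le E
    _ ≤ ∑' i, c * P (B i) := ENNReal.tsum_le_tsum h
    _ = c * P (⋃ i, B i) := by rw [ENNReal.tsum_mul_left, measure_iUnion hB hBm]

lemma measure_firstPassage_overshoot_le {Ω : Type*} [MeasurableSpace Ω] {P : Measure Ω}
    [IsFiniteMeasure P] {V : ℕ → Ω → ℝ} (hV : ∀ i, Measurable (V i)) (hindep : iIndepFun V P)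
    {y : ℝ} {c : ENNReal} {k : ℕ}
    (hV_law : ∀ a, P.map (V k) (Set.Icc a (a + y)) ≤ c * P.map (V k) (Set.Ici a)) (x : ℝ) :
    P {ω | IsFirstPassage (fun n => ∑ i ∈ range n, V i ω) x (k + 1) ∧
        ∑ i ∈ range (k + 1), V i ω ≤ x + y} ≤
      c * P {ω | IsFirstPassage (fun n => ∑ i ∈ range n, V i ω) x (k + 1)} := by
  -- Padding the first `k` steps with zeros gives a sequence independent of `V k` whose partial
  -- sums up to `k` are those of `V`.
  set Z : Ω → ℕ → ℝ := fun ω i => if h : i < k then V i ω else 0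
  have hZ : Measurable Z := measurable_pi_lambda _ fun i => by
    by_cases h : i < k <;> simp [Z, h, hV i]
  have hZW : IndepFun Z (V k) P := by
    have hpad : Measurable fun (t : range k → ℝ) (i : ℕ) =>
        if h : i < k then t ⟨i, mem_range.2 h⟩ else 0 :=
      measurable_pi_lambda _ fun i => by by_cases h : i < k <;> simp [h, measurable_pi_apply]
    have heval : Measurable fun (t : ({k} : Finset ℕ) → ℝ) => t ⟨k, mem_singleton_self k⟩ :=
      measurable_pi_apply _
    exact (hindep.indepFun_finset (range k) {k} (by simp) hV).comp hpad heval
  have hZsum : ∀ ω, ∀ j ≤ k, ∑ i ∈ range j, Z ω i = ∑ i ∈ range j, V i ω := fun ω j hj =>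
    sum_congr rfl fun i hi => dif_pos ((mem_range.1 hi).trans_le hj)
  set s : Set (ℕ → ℝ) := {z | ∀ j, 1 ≤ j → j < k + 1 → ∑ i ∈ range j, z i < x}
  have hs : MeasurableSet s := measurableSet_setOf_forall_lt
    (S := fun (z : ℕ → ℝ) j => ∑ i ∈ range j, z i)
    (fun j => measurable_sum _ fun i _ => measurable_pi_apply i) x (k + 1)
  have h := hZW.measure_overshoot_le hZ (hV k) hV_law hs
    (f := fun z => ∑ i ∈ range k, z i) (measurable_sum _ fun i _ => measurable_pi_apply i) x
  have hZs : ∀ ω, Z ω ∈ s ↔ ∀ j, 1 ≤ j → j < k + 1 → ∑ i ∈ range j, V i ω < x := fun ω =>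
    forall_congr' fun j => forall_congr' fun _ => forall_congr' fun hj => by
      rw [hZsum ω j (by omega)]
  convert h using 3 <;> ext ω <;>
    simp only [IsFirstPassage, Set.mem_ofPred_eq, Set.mem_Icc, hZs, sum_range_succ,
      hZsum ω k le_rfl, and_assoc]

theorem stmt9_general
    {Ω : Type*} [MeasurableSpace Ω] (P : Measure Ω) [IsProbabilityMeasure P]
    (m : ℝ) (hm : 0 < m)
    (X Y : Ω → ℝ) (hX : Measurable X) (hY : Measurable Y)
    (hXY : IndepFun X Y P)
    (hXexp : ∀ t : ℝ, 0 ≤ t → P {ω | X ω ≤ t} = ENNReal.ofReal (1 - Real.exp (-t / m)))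
    (hXpos : P {ω | X ω < 0} = 0)
    (V : ℕ → Ω → ℝ) (hVmeas : ∀ i, Measurable (V i))
    (hVindep : iIndepFun V P)
    (hVdist : ∀ i, Measure.map (V i) P = Measure.map (fun ω => X ω + Y ω) P)
    (x y : ℝ) (hy : 0 < y) :
    P {ω | ∃ n : ℕ, 1 ≤ n ∧
        (∀ k, 1 ≤ k → k < n → (∑ i ∈ Finset.range k, V i ω) < x) ∧
        x ≤ (∑ i ∈ Finset.range n, V i ω) ∧
        (∑ i ∈ Finset.range n, V i ω) ≤ x + y}
      ≤ ENNReal.ofReal (min 1 (y / m)) := by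
  have hX_law (a : ℝ) :
      P.map X (Set.Icc a (a + y)) ≤ ENNReal.ofReal (y / m) * P.map X (Set.Ici a) := by
    rw [map_eq_expMeasure hm hX hXexp hXpos, div_eq_inv_mul]
    exact expMeasure_Icc_le_mul_Ici (inv_pos.2 hm) hy.le a
  have hV_law (k : ℕ) (a : ℝ) :
      P.map (V k) (Set.Icc a (a + y)) ≤ ENNReal.ofReal (y / m) * P.map (V k) (Set.Ici a) := by
    rw [hVdist k]
    exact hXY.map_add_Icc_le_mul_Ici hX hY hX_law a
  set passage : ℕ → Set Ω := fun n => {ω | IsFirstPassage (fun j => ∑ i ∈ range j, V i ω) x n}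
  have hunion : {ω | ∃ n : ℕ, 1 ≤ n ∧
      (∀ k, 1 ≤ k → k < n → (∑ i ∈ Finset.range k, V i ω) < x) ∧
      x ≤ (∑ i ∈ Finset.range n, V i ω) ∧ (∑ i ∈ Finset.range n, V i ω) ≤ x + y} =
      ⋃ k : ℕ, passage (k + 1) ∩ {ω | ∑ i ∈ range (k + 1), V i ω ≤ x + y} := by
    ext ω
    simp only [passage, IsFirstPassage, Set.mem_iUnion, Set.mem_inter_iff, Set.mem_ofPred_eq,
      and_assoc]
    exact ⟨fun ⟨n, hn, h⟩ => ⟨n - 1, by rwa [Nat.sub_add_cancel hn]⟩,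
      fun ⟨k, h⟩ => ⟨k + 1, k.succ_pos, h⟩⟩
  rw [ENNReal.ofReal_min, ENNReal.ofReal_one, hunion]
  refine le_min prob_le_one ?_
  calc _ ≤ ENNReal.ofReal (y / m) * P (⋃ k : ℕ, passage (k + 1)) :=
        measure_iUnion_le_mul_of_pairwise_disjoint P
          (pairwise_disjoint_setOf_isFirstPassage_succ _ x)
          (fun _ => measurableSet_isFirstPassage
            (fun n => measurable_sum _ fun i _ => hVmeas i) x _)
          (fun k => measure_firstPassage_overshoot_le hVmeas hVindep (hV_law k) x)
    _ ≤ ENNReal.ofReal (y / m) := mul_le_of_le_one_right' prob_le_one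

/-- With `V = X + Y` (`X` exponential with mean `m`, `Y ≥ 0` independent), for the first
passage time `θ_x = min{n ≥ 1 : V_1 + ... + V_n ≥ x}` of the i.i.d. walk, the overshoot
satisfies `P{V_1 + ... + V_{θ_x} ≤ x + y} ≤ min{1, y/m}` for all `x, y > 0`. -/
theorem stmt9
    {Ω : Type*} [MeasurableSpace Ω] (P : Measure Ω) [IsProbabilityMeasure P]
    (m : ℝ) (hm : 0 < m)
    (X Y : Ω → ℝ) (hX : Measurable X) (hY : Measurable Y)
    (hXY : IndepFun X Y P)
    (hXexp : ∀ t : ℝ, 0 ≤ t → P {ω | X ω ≤ t} = ENNReal.ofReal (1 - Real.exp (-t / m)))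
    (hXpos : P {ω | X ω < 0} = 0)
    (hYpos : ∀ ω, 0 ≤ Y ω)
    (V : ℕ → Ω → ℝ) (hVmeas : ∀ i, Measurable (V i))
    (hVindep : iIndepFun V P)
    (hVdist : ∀ i, Measure.map (V i) P = Measure.map (fun ω => X ω + Y ω) P)
    (x y : ℝ) (hx : 0 < x) (hy : 0 < y) :
    P {ω | ∃ n : ℕ, 1 ≤ n ∧
        (∀ k, 1 ≤ k → k < n → (∑ i ∈ Finset.range k, V i ω) < x) ∧
        x ≤ (∑ i ∈ Finset.range n, V i ω) ∧
        (∑ i ∈ Finset.range n, V i ω) ≤ x + y}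
      ≤ ENNReal.ofReal (min 1 (y / m)) :=
  stmt9_general P m hm X Y hX hY hXY hXexp hXpos V hVmeas hVindep hVdist x y hy
end
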